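/- For every integer m ≥ 3, the following three identities hold, where Σ_{B_1,…,B_n} denotes the sum over all partitions of {1,…,m} into n nonempty blocks B_1,…,B_n: (i) Σ_{n=1}^m (−1)^{n−1}(n−1)! Σ_{B_1,…,B_n} 1 = 0; (ii) Σ_{n=1}^m (−1)^{n−1}(n−1)! Σ_{B_1,…,B_n} Σ_{i=1}^n |B_i|² = 0; (iii) Σ_{n=1}^m (−1)^{n−1}(n−1)! Σ_{B_1,…,B_n} Σ_{i≠j} |B_i||B_j| = 0. -/

import Mathlib

/-!
Each alternating sum has the form `∑_π μ(π, 1̂) ∏_{B ∈ π} f |B|` over the partition lattice of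
`{1, …, m}`, the classical expression of the `m`-th cumulant `κ m` of a moment sequence `f`.
Möbius inversion, in the form of the recursion `f (n + 1) = ∑_j C(n, j) κ (n + 1 - j) f j`
obtained by isolating the block of a fixed point, identifies the sum with `κ m`. The dual-number moments
`f k = 1 + k² ε` have cumulants `1 + ε, 2ε, 0, 0, …`, so for `m ≥ 3` the `ε⁰`- and
`ε¹`-coefficients give (i) and (ii); (iii) follows from them because
`∑_{i ≠ j} |B_i| |B_j| = m² - ∑ |B_i|²`.
-/

open Finset DualNumber TrivSqZeroExt

variable {α : Type*} [DecidableEq α]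

namespace Finpartition

lemma card_parts_eq_one_iff {s : Finset α} (hs : s ≠ ⊥) (P : Finpartition s) :
    #P.parts = 1 ↔ P = indiscrete hs := by
  refine ⟨fun h => ?_, by rintro rfl; simp⟩
  obtain ⟨B, hB⟩ := card_eq_one.1 h
  have hBs : B = s := by simpa [hB] using P.sup_parts
  ext1
  rw [hB, hBs, indiscrete_parts]

lemma avoid_parts_of_mem {s D : Finset α} (P : Finpartition s) (hD : D ∈ P.parts) :
    (P.avoid D).parts = P.parts.erase D := by
  ext C
  simp only [mem_avoid, mem_erase]
  constructor
  · rintro ⟨B, hB, hBD, rfl⟩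
    have hne : B ≠ D := by rintro rfl; exact hBD le_rfl
    have hdisj : Disjoint B D := P.disjoint hB hD hne
    exact ⟨by rwa [hdisj.sdiff_eq_left], by rwa [hdisj.sdiff_eq_left]⟩
  · rintro ⟨hne, hC⟩
    have hdisj : Disjoint C D := P.disjoint hC hD hne
    exact ⟨C, hC, fun hle => P.ne_bot hC (hdisj.eq_bot_of_le hle), hdisj.sdiff_eq_left⟩

lemma notMem_parts_sdiff {s D : Finset α} (Q : Finpartition (s \ D)) (hD : D.Nonempty) :
    D ∉ Q.parts := fun h => by
  obtain ⟨x, hx⟩ := hD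
  exact (mem_sdiff.1 (Q.subset h hx)).2 hx

lemma sum_filter_mem_parts {M : Type*} [AddCommMonoid M] {s D : Finset α} (hDs : D ⊆ s)
    (hD : D.Nonempty) (G : Finset (Finset α) → M) :
    ∑ P : Finpartition s with D ∈ P.parts, G P.parts =
      ∑ Q : Finpartition (s \ D), G (insert D Q.parts) := by
  symm
  refine sum_nbij' (fun Q => Q.extend hD.ne_empty sdiff_disjoint (sdiff_union_of_subset hDs))
    (fun P => P.avoid D) (fun Q _ => by simp) (fun _ _ => mem_univ _) (fun Q _ => ?_)
    (fun P hP => ?_) (fun _ _ => rfl)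
  · ext1
    rw [avoid_parts_of_mem _ (by simp), extend_parts, erase_insert (Q.notMem_parts_sdiff hD)]
  · ext1
    rw [extend_parts, avoid_parts_of_mem _ (mem_filter.1 hP).2, insert_erase (mem_filter.1 hP).2]

lemma card_filter_notMem_parts {s : Finset α} (P : Finpartition s) {a : α} (ha : a ∈ s) :
    #{B ∈ P.parts | a ∉ B} = #P.parts - 1 := by
  have : {B ∈ P.parts | a ∉ B} = P.parts.erase (P.part a) := by
    ext B
    simp only [mem_filter, mem_erase]
    refine ⟨fun ⟨hB, haB⟩ => ⟨?_, hB⟩, fun ⟨hne, hB⟩ => ⟨hB, fun haB => hne ?_⟩⟩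
    · rintro rfl
      exact haB (P.mem_part_self.2 ha)
    · exact (P.part_eq_of_mem hB haB).symm
  rw [this, card_erase_of_mem (P.part_mem.2 ha)]

end Finpartition

variable {R : Type*} [CommRing R]

variable (R) in
/-- The Möbius function `μ(π, 1̂)` of the partition lattice, for a partition `π` with `n` blocks. -/
def partitionMobius (n : ℕ) : R := (-1) ^ (n - 1) * (n - 1).factorial

lemma partitionMobius_succ_add_mul (n : ℕ) :
    partitionMobius R (n + 1) + n * partitionMobius R n = if n = 0 then 1 else 0 := by
  rcases n with _ | n
  · simp [partitionMobius]
  · simp only [partitionMobius, Nat.add_sub_cancel, Nat.factorial_succ, pow_succ]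
    push_cast
    ring

noncomputable def cumulant (f : ℕ → R) (s : Finset α) : R :=
  ∑ P : Finpartition s, partitionMobius R #P.parts * ∏ B ∈ P.parts, f #B

/- The term `D = ∅` is `cumulant f s`; the others regroup into partitions of `s` with a marked
block `D ∌ a`, and `μ (n + 1) + n μ n = 0` for `n ≥ 1` leaves only the one-block partition. -/
lemma sum_powerset_erase_cumulant_mul {f : ℕ → R} (hf : f 0 = 1) {s : Finset α} {a : α}
    (ha : a ∈ s) : ∑ D ∈ (s.erase a).powerset, cumulant f (s \ D) * f #D = f #s := by
  have hs : s ≠ ⊥ := ne_empty_of_mem ha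
  set w : Finpartition s → R := fun P => ∏ B ∈ P.parts, f #B
  have hmarked : ∀ D ∈ (s.erase a).powerset.erase ∅, cumulant f (s \ D) * f #D =
      ∑ P : Finpartition s with D ∈ P.parts, partitionMobius R (#P.parts - 1) * w P := by
    intro D hD
    obtain ⟨hD0, hDs⟩ := mem_erase.1 hD
    have hD : D.Nonempty := nonempty_iff_ne_empty.2 hD0
    rw [Finpartition.sum_filter_mem_parts (fun x hx => mem_of_mem_erase (mem_powerset.1 hDs hx)) hD
      (fun parts => partitionMobius R (#parts - 1) * ∏ B ∈ parts, f #B), cumulant, sum_mul]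
    refine sum_congr rfl fun Q _ => ?_
    rw [card_insert_of_notMem (Q.notMem_parts_sdiff hD), prod_insert (Q.notMem_parts_sdiff hD),
      Nat.add_sub_cancel]
    ring
  have hswap : ∑ D ∈ (s.erase a).powerset.erase ∅,
      ∑ P : Finpartition s with D ∈ P.parts, partitionMobius R (#P.parts - 1) * w P =
      ∑ P : Finpartition s, (#P.parts - 1 : ℕ) * (partitionMobius R (#P.parts - 1) * w P) := by
    rw [sum_comm' (t' := univ) (s' := fun P => {D ∈ P.parts | a ∉ D})]
    · refine sum_congr rfl fun P _ => ?_
      rw [sum_const, P.card_filter_notMem_parts ha, nsmul_eq_mul]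
    · intro D P
      simp only [mem_erase, mem_powerset, mem_filter, mem_univ, true_and, and_true]
      refine ⟨fun ⟨⟨_, hDs⟩, hDP⟩ => ⟨hDP, fun haD => (notMem_erase a s) (hDs haD)⟩,
        fun ⟨hDP, haD⟩ => ⟨⟨P.ne_empty hDP, fun x hx => mem_erase.2 ⟨?_, P.subset hDP hx⟩⟩, hDP⟩⟩
      rintro rfl
      exact haD hx
  rw [← add_sum_erase _ _ (empty_mem_powerset _), sum_congr rfl hmarked, hswap, sdiff_empty,
    card_empty, hf, mul_one, cumulant, ← sum_add_distrib,
    sum_eq_single_of_mem (Finpartition.indiscrete hs) (mem_univ _)]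
  · simp [w, partitionMobius]
  · intro P _ hP
    obtain ⟨n, hn⟩ : ∃ n, #P.parts = n + 1 :=
      Nat.exists_eq_add_one.2 (card_pos.2 (P.parts_nonempty hs))
    have hn0 : n ≠ 0 := by
      rintro rfl
      exact hP ((P.card_parts_eq_one_iff hs).1 hn)
    rw [hn, Nat.add_sub_cancel, ← mul_assoc, ← add_mul, partitionMobius_succ_add_mul, if_neg hn0,
      zero_mul]

theorem cumulant_eq_of_recursion {f φ : ℕ → R} (hf0 : f 0 = 1)
    (hf : ∀ n, f (n + 1) = ∑ j ∈ range (n + 1), (n.choose j : R) * φ (n + 1 - j) * f j)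
    {s : Finset α} (hs : s.Nonempty) : cumulant f s = φ #s := by
  induction s using Finset.strongInduction with
  | H s ih =>
  obtain ⟨a, ha⟩ := hs
  have hcard : #s = #(s.erase a) + 1 := (card_erase_add_one ha).symm
  have hmoment : ∑ D ∈ (s.erase a).powerset, φ #(s \ D) * f #D = f #s := by
    have hsub : ∀ D ∈ (s.erase a).powerset, #(s \ D) = #(s.erase a) + 1 - #D := fun D hD => by
      rw [card_sdiff_of_subset ((mem_powerset.1 hD).trans (erase_subset a s)), hcard]
    rw [sum_congr rfl fun D hD => by rw [hsub D hD],
      sum_powerset_apply_card (fun j => φ (#(s.erase a) + 1 - j) * f j), hcard, hf]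
    simp only [nsmul_eq_mul, mul_assoc]
  have hsmaller : ∀ D ∈ (s.erase a).powerset.erase ∅, cumulant f (s \ D) * f #D =
      φ #(s \ D) * f #D := fun D hD => by
    obtain ⟨hD0, hDs⟩ := mem_erase.1 hD
    have hDs' : D ⊆ s.erase a := mem_powerset.1 hDs
    rw [ih _ (sdiff_ssubset (hDs'.trans (erase_subset a s)) (nonempty_iff_ne_empty.2 hD0))
      ⟨a, mem_sdiff.2 ⟨ha, fun haD => notMem_erase a s (hDs' haD)⟩⟩]
  have hkey := sum_powerset_erase_cumulant_mul hf0 ha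
  rw [← add_sum_erase _ _ (empty_mem_powerset _), sum_congr rfl hsmaller] at hkey
  rw [← add_sum_erase _ _ (empty_mem_powerset _)] at hmoment
  have h := hkey.trans hmoment.symm
  rw [sdiff_empty, card_empty, hf0, mul_one, mul_one] at h
  exact add_right_cancel h

noncomputable def sqMoment (k : ℕ) : R[ε] := 1 + ((k : R) ^ 2) • ε

noncomputable def sqCumulant : ℕ → R[ε]
  | 1 => 1 + ε
  | 2 => (2 : R) • ε
  | _ => 0

lemma sqCumulant_of_three_le {k : ℕ} (hk : 3 ≤ k) : (sqCumulant k : R[ε]) = 0 := by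
  obtain ⟨n, rfl⟩ := Nat.exists_eq_add_of_le' hk
  rfl

lemma sqMoment_succ (n : ℕ) : (sqMoment (n + 1) : R[ε]) =
    ∑ j ∈ range (n + 1), (n.choose j : R[ε]) * sqCumulant (n + 1 - j) * sqMoment j := by
  rcases n with _ | n
  · simp [sqMoment, sqCumulant]
  rw [sum_range_succ, sum_range_succ, sum_eq_zero fun j hj =>
    by rw [sqCumulant_of_three_le (by simp at hj; omega), mul_zero, zero_mul]]
  simp only [Nat.choose_self, Nat.choose_succ_self_right, show n + 1 + 1 - n = 2 by omega,
    Nat.add_sub_cancel_left, sqCumulant, sqMoment]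
  ext
  · simp
  · simp
    ring

lemma prod_one_add_smul_eps {ι : Type*} (t : Finset ι) (g : ι → R) :
    ∏ i ∈ t, (1 + g i • ε : R[ε]) = 1 + (∑ i ∈ t, g i) • ε := by
  induction t using Finset.cons_induction with
  | empty => simp
  | cons i t hi ih =>
    rw [prod_cons, ih, sum_cons, add_smul, add_mul, mul_add, mul_add, smul_mul_smul_comm,
      eps_mul_eps, smul_zero]
    simp only [one_mul, mul_one]
    abel

lemma cumulant_sqMoment (s : Finset α) : (cumulant sqMoment s : R[ε]) =
    inl (∑ P : Finpartition s, partitionMobius R #P.parts) +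
      inr (∑ P : Finpartition s, partitionMobius R #P.parts * ∑ B ∈ P.parts, (#B : R) ^ 2) := by
  have hμ : ∀ n, (partitionMobius R[ε] n) = inl (partitionMobius R n) := fun n => by
    simp only [partitionMobius, inl_mul, ← inl_pow, inl_neg, inl_one, inl_natCast]
  simp only [cumulant, sqMoment, prod_one_add_smul_eps, hμ, inl_sum, inr_sum, ← sum_add_distrib]
  refine sum_congr rfl fun P _ => ?_
  rw [mul_add, mul_one, inl_mul_eq_smul, smul_smul, inr_eq_smul_eps]

lemma cumulant_sqMoment_of_three_le {s : Finset α} (hs : 3 ≤ #s) :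
    (cumulant sqMoment s : R[ε]) = 0 := by
  rw [cumulant_eq_of_recursion (by simp [sqMoment]) sqMoment_succ (card_pos.1 (by omega)),
    sqCumulant_of_three_le hs]

lemma sum_Icc_mul_sum_card_parts_eq {M : Type*} [NonUnitalNonAssocSemiring M] {s : Finset α}
    (hs : s.Nonempty) {N : ℕ} (hN : #s ≤ N) (c : ℕ → M) (G : Finpartition s → M) :
    ∑ n ∈ Icc 1 N, c n * ∑ P : Finpartition s with #P.parts = n, G P =
      ∑ P : Finpartition s, c #P.parts * G P := by
  rw [← sum_fiberwise_of_maps_to (g := fun P : Finpartition s => #P.parts) (t := Icc 1 N)]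
  · refine sum_congr rfl fun n _ => ?_
    rw [mul_sum]
    exact sum_congr rfl fun P hP => by rw [(mem_filter.1 hP).2]
  · intro P _
    exact mem_Icc.2 ⟨card_pos.2 (P.parts_nonempty hs.ne_empty), P.card_parts_le_card.trans hN⟩

lemma sum_sum_ite_ne_mul {ι : Type*} [DecidableEq ι] (t : Finset ι) (g : ι → R) :
    ∑ i ∈ t, ∑ j ∈ t, (if i ≠ j then g i * g j else 0) = (∑ i ∈ t, g i) ^ 2 - ∑ i ∈ t, g i ^ 2 := by
  have h : ∀ i j, (if i ≠ j then g i * g j else 0) = g i * g j - if i = j then g i * g j else 0 :=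
    fun i j => by split_ifs <;> simp_all
  simp [h, sum_sub_distrib, sq, sum_mul_sum]

theorem statement10 (m : ℕ) (hm : 3 ≤ m) :
    (∑ n ∈ Finset.Icc 1 m, (-1 : ℝ) ^ (n - 1) * (n - 1).factorial *
        ∑ P ∈ (Finset.univ.filter
            (fun P : Finpartition (Finset.univ : Finset (Fin m)) => P.parts.card = n)),
          (1 : ℝ)) = 0 ∧
    (∑ n ∈ Finset.Icc 1 m, (-1 : ℝ) ^ (n - 1) * (n - 1).factorial *
        ∑ P ∈ (Finset.univ.filter
            (fun P : Finpartition (Finset.univ : Finset (Fin m)) => P.parts.card = n)),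
          ∑ B ∈ P.parts, ((B.card : ℝ)) ^ 2) = 0 ∧
    (∑ n ∈ Finset.Icc 1 m, (-1 : ℝ) ^ (n - 1) * (n - 1).factorial *
        ∑ P ∈ (Finset.univ.filter
            (fun P : Finpartition (Finset.univ : Finset (Fin m)) => P.parts.card = n)),
          ∑ B ∈ P.parts, ∑ B' ∈ P.parts, if B ≠ B' then (B.card : ℝ) * B'.card else 0) = 0 := by
  have hcard : #(univ : Finset (Fin m)) = m := by simp
  have hreindex := sum_Icc_mul_sum_card_parts_eq (univ_nonempty_iff.2 ⟨⟨0, by omega⟩⟩) hcard.le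
    (partitionMobius ℝ)
  have hzero := cumulant_sqMoment_of_three_le (R := ℝ) (hcard.symm ▸ hm)
  rw [cumulant_sqMoment, TrivSqZeroExt.ext_iff] at hzero
  simp only [fst_add, fst_inl, fst_inr, snd_add, snd_inl, snd_inr, add_zero, zero_add, fst_zero,
    snd_zero] at hzero
  obtain ⟨h1, h2⟩ := hzero
  have hpair : ∀ P : Finpartition (univ : Finset (Fin m)), ∑ B ∈ P.parts, ∑ B' ∈ P.parts,
      (if B ≠ B' then (#B : ℝ) * #B' else 0) = (m : ℝ) ^ 2 - ∑ B ∈ P.parts, (#B : ℝ) ^ 2 :=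
    fun P => by rw [sum_sum_ite_ne_mul, ← Nat.cast_sum, P.sum_card_parts, hcard]
  simp only [partitionMobius] at hreindex h1 h2
  simp only [hreindex, hpair, mul_sub, sum_sub_distrib, ← sum_mul, h1, h2]
  simp
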